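/- arXiv:1607.08558 — 4 statements merged into one kernel-verified Lean document; each statement's English description precedes it below -/
import Mathlib

section
/- Let u be a formal power series over a field with constant coefficient 1 that is even to order 2m-2 (all odd coefficients below degree 2m-1 vanish). Then its multiplicative inverse u^{-1} is also even to order 2m-2, and the coefficient of x^{2m-1} in u^{-1} equals the negative of the coefficient of x^{2m-1} in u. -/
open PowerSeries

lemma stmt2_aux {K : Type*} [Field K] (m : ℕ) (u : PowerSeries K)
    (hu0 : constantCoeff u = 1)
    (heven : ∀ j, Odd j → j < 2 * m - 1 → coeff j u = 0) :
    ∀ j, Odd j → j < 2 * m - 1 → coeff j u⁻¹ = 0 := by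
  intro j
  induction j using Nat.strong_induction_on with
  | _ n ih =>
    intro hodd hlt
    have hn0 : n ≠ 0 := by rintro rfl; exact (Nat.not_odd_iff_even.mpr Even.zero) hodd
    rw [PowerSeries.coeff_inv, if_neg hn0, hu0, inv_one, neg_one_mul, neg_eq_zero]
    apply Finset.sum_eq_zero
    intro x hx
    rw [Finset.HasAntidiagonal.mem_antidiagonal] at hx
    split_ifs with h
    · rcases Nat.even_or_odd x.1 with he | ho
      · obtain ⟨a, ha⟩ := he
        obtain ⟨b, hb⟩ := hodd
        have hx2 : Odd x.2 := ⟨b - a, by omega⟩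
        rw [ih x.2 h hx2 (lt_trans h hlt), mul_zero]
      · rw [heven x.1 ho (by omega), zero_mul]
    · rfl

/-- the inverse of a power series with constant term 1 which is even to
order 2m-2 is again even to order 2m-2, and its coefficient of x^{2m-1} is the negative
of that of the original series. -/
theorem stmt2 {K : Type*} [Field K] (m : ℕ) (hm : 1 ≤ m) (u : PowerSeries K)
    (hu0 : constantCoeff u = 1)
    (heven : ∀ j, Odd j → j < 2 * m - 1 → coeff j u = 0) :
    (∀ j, Odd j → j < 2 * m - 1 → coeff j u⁻¹ = 0) ∧
    coeff (2 * m - 1) u⁻¹ = - coeff (2 * m - 1) u := by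
  refine ⟨stmt2_aux m u hu0 heven, ?_⟩
  set n := 2 * m - 1 with hn
  have hn0 : n ≠ 0 := by omega
  rw [PowerSeries.coeff_inv, if_neg hn0, hu0, inv_one, neg_one_mul, neg_inj]
  rw [Finset.sum_eq_single (n, 0)]
  · rw [if_pos (by omega)]
    have : coeff 0 u⁻¹ = 1 := by
      rw [PowerSeries.coeff_inv, if_pos rfl, hu0, inv_one]
    rw [this, mul_one]
  · intro x hx hne
    rw [Finset.HasAntidiagonal.mem_antidiagonal] at hx
    split_ifs with h
    · rcases Nat.even_or_odd x.2 with he | ho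
      · have hx2 : x.2 ≠ 0 := by
          rintro h0
          exact hne (by rw [Prod.ext_iff]; omega)
        have hodd : Odd x.1 := by
          obtain ⟨a, ha⟩ := he
          exact ⟨m - 1 - a, by omega⟩
        rw [heven x.1 hodd (by omega), zero_mul]
      · rw [stmt2_aux m u hu0 heven x.2 ho (by omega), mul_zero]
    · rfl
  · intro hmem
    exact absurd (Finset.HasAntidiagonal.mem_antidiagonal.mpr (by omega)) hmem
end

section
/- Let h(x) be a formal power series with values in symmetric bilinear forms on ℝ^{n-1} (equivalently, a matrix power series), with h(0) = h_0 positive definite, and suppose h is even to order n-2 with n = 2m even. Then the power series J(x) = sqrt(det h(x) / det h_0) is even to order n-2, and its coefficient of x^{n-1} equals (1/2)·tr^{h_0}(h_{n-1}), where h_{n-1} is the coefficient of x^{n-1} in h and tr^{h_0}(k) = trace(h_0^{-1}k). -/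
open PowerSeries

/-- Auxiliary: coefficient of `x^k` of `det H` for odd `k ≤ 2m-1`, when odd
coefficients below `2m-1` vanish. -/
lemma stmt11_key (m : ℕ) (d : ℕ)
    (H : Matrix (Fin d) (Fin d) (PowerSeries ℝ))
    (h0 : Matrix (Fin d) (Fin d) ℝ)
    (hh0 : ∀ i j, constantCoeff (H i j) = h0 i j)
    (heven : ∀ i j, ∀ k, Odd k → k < 2 * m - 1 → coeff k (H i j) = 0)
    (k : ℕ) (hk : k % 2 = 1) (hk2 : k ≤ 2 * m - 1) :
    coeff k H.det =
      ∑ i : Fin d, ∑ j : Fin d, h0.adjugate i j * coeff k (H j i) := by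
  classical
  have hk0 : k ≠ 0 := by omega
  rw [Matrix.det_apply', map_sum]
  have step1 : ∀ σ : Equiv.Perm (Fin d),
      coeff k (((Equiv.Perm.sign σ : ℤ) : PowerSeries ℝ) * ∏ i, H (σ i) i) =
      ((Equiv.Perm.sign σ : ℤ) : ℝ) *
        ∑ i : Fin d, coeff k (H (σ i) i) * ∏ j ∈ Finset.univ.erase i, h0 (σ j) j := by
    intro σ
    rw [← map_intCast (C (R := ℝ)) (Equiv.Perm.sign σ : ℤ), coeff_C_mul, coeff_prod]
    congr 1
    have hsub : (Finset.univ.image fun i : Fin d => Finsupp.single i k) ⊆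
        Finset.univ.finsuppAntidiag k := by
      intro l hl
      simp only [Finset.mem_image] at hl
      obtain ⟨i, -, rfl⟩ := hl
      rw [Finset.mem_finsuppAntidiag]
      constructor
      · simp [Finsupp.single_apply, Finset.sum_ite_eq']
      · intro j _; exact Finset.mem_univ j
    have hzero : ∀ l ∈ Finset.univ.finsuppAntidiag k,
        l ∉ (Finset.univ.image fun i : Fin d => Finsupp.single i k) →
        (∏ i : Fin d, coeff (l i) (H (σ i) i)) = 0 := by
      intro l hl hnot
      rw [Finset.mem_finsuppAntidiag] at hl
      obtain ⟨hsum, -⟩ := hl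
      by_cases hex : ∃ i, l i = k
      · exfalso
        obtain ⟨i, hi⟩ := hex
        apply hnot
        rw [Finset.mem_image]
        refine ⟨i, Finset.mem_univ i, ?_⟩
        have h1 : l i + ∑ j ∈ Finset.univ.erase i, l j = k := by
          rw [Finset.add_sum_erase _ _ (Finset.mem_univ i)]; exact hsum
        have h2 : ∑ j ∈ Finset.univ.erase i, l j = 0 := by omega
        ext j
        by_cases hji : j = i
        · subst hji; simp [hi]
        · have : l j = 0 :=
            (Finset.sum_eq_zero_iff.mp h2) j (Finset.mem_erase.mpr ⟨hji, Finset.mem_univ j⟩)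
          simp [Finsupp.single_apply, Ne.symm hji, this]
      · push_neg at hex
        have hlt : ∀ i, l i < k := by
          intro i
          have hle : l i ≤ k := by
            rw [← hsum]
            exact Finset.single_le_sum (fun j _ => Nat.zero_le (l j)) (Finset.mem_univ i)
          exact lt_of_le_of_ne hle (hex i)
        have hodd : ∃ i, l i % 2 = 1 := by
          by_contra hall
          push_neg at hall
          have h2 : k % 2 = (∑ i, l i % 2) % 2 := by
            rw [← Finset.sum_nat_mod, hsum]
          have h3 : ∑ i : Fin d, l i % 2 = 0 :=
            Finset.sum_eq_zero fun i _ => by have := hall i; omega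
          rw [h3] at h2; omega
        obtain ⟨i, hi⟩ := hodd
        exact Finset.prod_eq_zero (Finset.mem_univ i)
          (heven _ _ _ (Nat.odd_iff.mpr hi) (by have := hlt i; omega))
    rw [← Finset.sum_subset hsub hzero,
      Finset.sum_image (fun i _ j _ h => Finsupp.single_left_injective hk0 h)]
    refine Finset.sum_congr rfl fun i _ => ?_
    rw [← Finset.mul_prod_erase _ _ (Finset.mem_univ i), Finsupp.single_eq_same]
    congr 1
    refine Finset.prod_congr rfl fun j hj => ?_
    have hji : j ≠ i := (Finset.mem_erase.mp hj).1
    rw [Finsupp.single_eq_of_ne hji, coeff_zero_eq_constantCoeff_apply]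
    exact hh0 (σ j) j
  calc (∑ σ : Equiv.Perm (Fin d),
        coeff k (((Equiv.Perm.sign σ : ℤ) : PowerSeries ℝ) * ∏ i, H (σ i) i))
      = ∑ σ : Equiv.Perm (Fin d), ∑ i : Fin d, ((Equiv.Perm.sign σ : ℤ) : ℝ) *
          (coeff k (H (σ i) i) * ∏ j ∈ Finset.univ.erase i, h0 (σ j) j) := by
        refine Finset.sum_congr rfl fun σ _ => ?_
        rw [step1 σ, Finset.mul_sum]
    _ = ∑ i : Fin d, ∑ σ : Equiv.Perm (Fin d), ((Equiv.Perm.sign σ : ℤ) : ℝ) *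
          (coeff k (H (σ i) i) * ∏ j ∈ Finset.univ.erase i, h0 (σ j) j) :=
        Finset.sum_comm
    _ = ∑ i : Fin d, (h0.updateCol i fun x => coeff k (H x i)).det := by
        refine Finset.sum_congr rfl fun i _ => ?_
        rw [Matrix.det_apply']
        refine (Finset.sum_congr rfl fun σ _ => ?_).symm
        congr 1
        rw [← Finset.mul_prod_erase _ _ (Finset.mem_univ i)]
        congr 1
        · simp [Matrix.updateCol_apply]
        · refine Finset.prod_congr rfl fun j hj => ?_
          have hji : j ≠ i := (Finset.mem_erase.mp hj).1
          simp [Matrix.updateCol_apply, hji]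
    _ = ∑ i : Fin d, ∑ j : Fin d, h0.adjugate i j * coeff k (H j i) := by
        refine Finset.sum_congr rfl fun i _ => ?_
        rw [← Matrix.cramer_apply, Matrix.cramer_eq_adjugate_mulVec]
        simp [Matrix.mulVec, dotProduct]

/-- for a symmetric-matrix-valued power series h, even to order n-2
(n = 2m) with positive definite constant term h₀, the square root
J = sqrt(det h / det h₀) (normalized by J(0) = 1) is even to order n-2 and its
coefficient of x^{n-1} equals (1/2)·tr^{h₀}(h_{n-1}). -/
theorem stmt11 (m : ℕ) (hm : 1 ≤ m) (d : ℕ)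
    (H : Matrix (Fin d) (Fin d) (PowerSeries ℝ))
    (hsymm : H.IsSymm)
    (h0 : Matrix (Fin d) (Fin d) ℝ)
    (hh0 : ∀ i j, constantCoeff (H i j) = h0 i j)
    (hpd : h0.PosDef)
    (heven : ∀ i j, ∀ k, Odd k → k < 2 * m - 1 → coeff k (H i j) = 0)
    (J : PowerSeries ℝ)
    (hJ0 : constantCoeff J = 1)
    (hJ : J ^ 2 * C h0.det = H.det) :
    (∀ k, Odd k → k < 2 * m - 1 → coeff k J = 0) ∧
    coeff (2 * m - 1) J =
      (1 / 2) * Matrix.trace (h0⁻¹ * (Matrix.of fun i j => coeff (2 * m - 1) (H i j))) := by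
  classical
  have hdet : h0.det ≠ 0 := ne_of_gt hpd.det_pos
  -- coefficient of J^2 at odd k, assuming lower odd coefficients vanish
  have hJsq : ∀ k : ℕ, k % 2 = 1 → (∀ a, a % 2 = 1 → a < k → coeff a J = 0) →
      coeff k (J ^ 2) = 2 * coeff k J := by
    intro k hk hP
    have hk0 : k ≠ 0 := by omega
    rw [sq, coeff_mul]
    have hsub : ({(0, k), (k, 0)} : Finset (ℕ × ℕ)) ⊆ Finset.HasAntidiagonal.antidiagonal k := by
      intro p hp
      simp only [Finset.mem_insert, Finset.mem_singleton] at hp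
      rcases hp with rfl | rfl <;> simp [Finset.mem_antidiagonal]
    have hzero : ∀ p ∈ Finset.HasAntidiagonal.antidiagonal k,
        p ∉ ({(0, k), (k, 0)} : Finset (ℕ × ℕ)) →
        coeff p.1 J * coeff p.2 J = 0 := by
      rintro ⟨a, b⟩ hp hnp
      rw [Finset.HasAntidiagonal.mem_antidiagonal] at hp
      simp only [Finset.mem_insert, Finset.mem_singleton, Prod.mk.injEq, not_or] at hnp
      have ha : a ≠ 0 := by rintro rfl; exact hnp.1 ⟨rfl, by omega⟩
      have hb : b ≠ 0 := by rintro rfl; exact hnp.2 ⟨by omega, rfl⟩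
      rcases Nat.even_or_odd a with hea | hoa
      · have hob : b % 2 = 1 := by
          have := Nat.even_iff.mp hea; omega
        rw [hP b hob (by omega), mul_zero]
      · rw [hP a (Nat.odd_iff.mp hoa) (by omega), zero_mul]
    rw [← Finset.sum_subset hsub hzero]
    rw [Finset.sum_insert (by simp [hk0, Ne.symm hk0]), Finset.sum_singleton]
    simp only [coeff_zero_eq_constantCoeff_apply, hJ0]
    ring
  -- relating coefficients of det H to J
  have hcoeffdet : ∀ k : ℕ, coeff k (J ^ 2) * h0.det = coeff k H.det := by
    intro k
    rw [← hJ, coeff_mul_C]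
  -- Part 1 with mod-2 phrasing, by strong induction
  have P : ∀ k, k % 2 = 1 → k < 2 * m - 1 → coeff k J = 0 := by
    intro k
    induction k using Nat.strong_induction_on with
    | _ k IH =>
      intro hk hlt
      have hmid : ∀ a, a % 2 = 1 → a < k → coeff a J = 0 := fun a ha hak =>
        IH a hak ha (by omega)
      have e1 := hcoeffdet k
      rw [stmt11_key m d H h0 hh0 heven k hk (by omega)] at e1
      have e2 : (∑ i : Fin d, ∑ j : Fin d, h0.adjugate i j * coeff k (H j i)) = 0 :=
        Finset.sum_eq_zero fun i _ => Finset.sum_eq_zero fun j _ => by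
          rw [heven _ _ k (Nat.odd_iff.mpr hk) hlt, mul_zero]
      rw [hJsq k hk hmid, e2] at e1
      have := mul_eq_zero.mp e1
      rcases this with h | h
      · have := mul_eq_zero.mp h
        rcases this with h' | h'
        · norm_num at h'
        · exact h'
      · exact absurd h hdet
  have h2m : (2 * m - 1) % 2 = 1 := by omega
  constructor
  · intro k hk hlt
    exact P k (Nat.odd_iff.mp hk) hlt
  · -- Part 2
    have hmid : ∀ a, a % 2 = 1 → a < 2 * m - 1 → coeff a J = 0 := P
    have e1 := hcoeffdet (2 * m - 1)
    rw [stmt11_key m d H h0 hh0 heven (2 * m - 1) h2m le_rfl, hJsq _ h2m hmid] at e1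
    -- trace computation
    have htr : Matrix.trace (h0⁻¹ * (Matrix.of fun i j => coeff (2 * m - 1) (H i j))) =
        (h0.det)⁻¹ * ∑ i : Fin d, ∑ j : Fin d, h0.adjugate i j * coeff (2 * m - 1) (H j i) := by
      rw [Matrix.inv_def, Ring.inverse_eq_inv, Matrix.smul_mul, Matrix.trace_smul, smul_eq_mul]
      congr 1
    rw [htr, ← e1]
    field_simp
end

section
/- Suppose a block 2×2 symmetric matrix power series G(x) over ℝ has components G_{xx}(x), G_{xα}(x), G_{αβ}(x) where G_{xx} and G_{αβ} are even to order 2ℓ and G_{xα} is odd to order 2ℓ+1 (coefficients of even powers ≤ 2ℓ vanish), and G(0) is invertible with G_{xα}(0) = 0. Then the inverse matrix G(x)^{-1} has the same parity structure: its (xx) and (αβ) components are even to order 2ℓ and its (xα) components are odd to order 2ℓ+1. -/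
open PowerSeries Finset

lemma aux13 {n ℓ : ℕ} (s : Fin n → ℝ) (hs : ∀ i, s i * s i = 1)
    (G H : PowerSeries (Matrix (Fin n) (Fin n) ℝ))
    (hG : ∀ a, a ≤ 2 * ℓ → Matrix.diagonal s * coeff a G * Matrix.diagonal s
        = (-1 : ℝ) ^ a • coeff a G)
    (hGH : G * H = 1) (hHG : H * G = 1) :
    ∀ k, k ≤ 2 * ℓ → Matrix.diagonal s * coeff k H * Matrix.diagonal s
        = (-1 : ℝ) ^ k • coeff k H := by
  set S := (Matrix.diagonal s : Matrix (Fin n) (Fin n) ℝ) with hSdef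
  have hSS : S * S = 1 := by
    rw [hSdef, Matrix.diagonal_mul_diagonal]
    convert Matrix.diagonal_one
    exact hs _
  have h1 : coeff 0 G * coeff 0 H = 1 := by
    have := congrArg (coeff (R := Matrix (Fin n) (Fin n) ℝ) 0) hGH
    simpa [coeff_zero_eq_constantCoeff, map_mul] using this
  have h2 : coeff 0 H * coeff 0 G = 1 := by
    have := congrArg (coeff (R := Matrix (Fin n) (Fin n) ℝ) 0) hHG
    simpa [coeff_zero_eq_constantCoeff, map_mul] using this
  have hG0 : S * coeff 0 G * S = coeff 0 G := by
    simpa using hG 0 (Nat.zero_le _)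
  have hcomm : coeff 0 G * S = S * coeff 0 G := by
    have := congrArg (· * S) hG0
    simpa [mul_assoc, hSS] using this.symm
  intro k
  induction k using Nat.strong_induction_on with
  | _ k IH =>
    intro hk
    by_cases k0 : k = 0
    · subst k0
      have key : coeff 0 G * (S * coeff 0 H * S) = 1 := by
        calc coeff 0 G * (S * coeff 0 H * S)
            = (coeff 0 G * S) * coeff 0 H * S := by noncomm_ring
          _ = S * (coeff 0 G * coeff 0 H) * S := by rw [hcomm]; noncomm_ring
          _ = 1 := by rw [h1, mul_one, hSS]
      have : S * coeff 0 H * S = coeff 0 H := by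
        calc S * coeff 0 H * S
            = (coeff 0 H * coeff 0 G) * (S * coeff 0 H * S) := by
              rw [h2, one_mul]
          _ = coeff 0 H * (coeff 0 G * (S * coeff 0 H * S)) := by noncomm_ring
          _ = coeff 0 H := by rw [key, mul_one]
      simpa using this
    · have hmem : ((0 : ℕ), k) ∈ antidiagonal k := by simp
      have hsum : coeff 0 G * coeff k H
          + ∑ p ∈ (antidiagonal k).erase (0, k),
              coeff p.1 G * coeff p.2 H = 0 := by
        have h := congrArg (coeff (R := Matrix (Fin n) (Fin n) ℝ) k) hGH
        rw [coeff_mul, coeff_one, if_neg k0] at h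
        rw [← Finset.add_sum_erase _ (fun p => coeff (R := Matrix (Fin n) (Fin n) ℝ) p.1 G *
          coeff (R := Matrix (Fin n) (Fin n) ℝ) p.2 H) hmem] at h
        exact h
      have e2 : coeff 0 G * coeff k H
          = -∑ p ∈ (antidiagonal k).erase (0, k),
              coeff p.1 G * coeff p.2 H :=
        eq_neg_of_add_eq_zero_left hsum
      have key : coeff 0 G * (S * coeff k H * S)
          = coeff 0 G * ((-1 : ℝ) ^ k • coeff k H) := by
        calc coeff 0 G * (S * coeff k H * S)
            = (coeff 0 G * S) * coeff k H * S := by noncomm_ring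
          _ = S * (coeff 0 G * coeff k H) * S := by rw [hcomm]; noncomm_ring
          _ = S * (-∑ p ∈ (antidiagonal k).erase (0, k),
                coeff p.1 G * coeff p.2 H) * S := by rw [e2]
          _ = -∑ p ∈ (antidiagonal k).erase (0, k),
                S * (coeff p.1 G * coeff p.2 H) * S := by
              rw [mul_neg, neg_mul, Finset.mul_sum, Finset.sum_mul]
          _ = -∑ p ∈ (antidiagonal k).erase (0, k),
                (-1 : ℝ) ^ k • (coeff p.1 G * coeff p.2 H) := by
              congr 1
              refine Finset.sum_congr rfl ?_
              intro p hp
              have hpmem := Finset.mem_of_mem_erase hp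
              have hpk : p.1 + p.2 = k := by
                simpa [Finset.mem_antidiagonal] using hpmem
              have hp1 : p.1 ≠ 0 := by
                intro h0
                apply Finset.ne_of_mem_erase hp
                have : p.2 = k := by omega
                exact Prod.ext h0 this
              have hp2lt : p.2 < k := by omega
              have hGa := hG p.1 (by omega)
              have hHb := IH p.2 hp2lt (by omega)
              calc S * (coeff p.1 G * coeff p.2 H) * S
                  = (S * coeff p.1 G * S) * (S * coeff p.2 H * S) := by
                    have : S * coeff p.1 G * (S * S) * coeff p.2 H * S
                        = S * coeff p.1 G * S * (S * coeff p.2 H * S) := by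
                      noncomm_ring
                    rw [hSS] at this
                    rw [← this]; noncomm_ring
                _ = ((-1 : ℝ) ^ p.1 • coeff p.1 G) * ((-1 : ℝ) ^ p.2 • coeff p.2 H) := by
                    rw [hGa, hHb]
                _ = (-1 : ℝ) ^ k • (coeff p.1 G * coeff p.2 H) := by
                    rw [smul_mul_smul_comm, ← pow_add, hpk]
          _ = (-1 : ℝ) ^ k • (coeff 0 G * coeff k H) := by
              rw [← Finset.smul_sum, ← smul_neg, ← e2]
          _ = coeff 0 G * ((-1 : ℝ) ^ k • coeff k H) := by
              rw [mul_smul_comm]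
      calc S * coeff k H * S
          = (coeff 0 H * coeff 0 G) * (S * coeff k H * S) := by rw [h2, one_mul]
        _ = coeff 0 H * (coeff 0 G * (S * coeff k H * S)) := by noncomm_ring
        _ = coeff 0 H * (coeff 0 G * ((-1 : ℝ) ^ k • coeff k H)) := by rw [key]
        _ = (coeff 0 H * coeff 0 G) * ((-1 : ℝ) ^ k • coeff k H) := by noncomm_ring
        _ = (-1 : ℝ) ^ k • coeff k H := by rw [h2, one_mul]

/-- if a symmetric matrix power series G has (xx)- and (αβ)-components
even to order 2ℓ and (xα)-components odd to order 2ℓ+1 (index 0 playing the role of x),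
with G(0) invertible, then its inverse has the same parity structure. -/
theorem stmt13 (d ℓ : ℕ)
    (G H : PowerSeries (Matrix (Fin (d + 1)) (Fin (d + 1)) ℝ))
    (hsym : ∀ k, (coeff (R := Matrix (Fin (d + 1)) (Fin (d + 1)) ℝ) k G).IsSymm)
    (hxx : ∀ k, Odd k → k ≤ 2 * ℓ →
      coeff (R := Matrix (Fin (d + 1)) (Fin (d + 1)) ℝ) k G 0 0 = 0)
    (hab : ∀ k, Odd k → k ≤ 2 * ℓ → ∀ i j : Fin (d + 1), i ≠ 0 → j ≠ 0 →
      coeff (R := Matrix (Fin (d + 1)) (Fin (d + 1)) ℝ) k G i j = 0)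
    (hxa : ∀ k, Even k → k ≤ 2 * ℓ → ∀ j : Fin (d + 1), j ≠ 0 →
      coeff (R := Matrix (Fin (d + 1)) (Fin (d + 1)) ℝ) k G 0 j = 0 ∧
      coeff (R := Matrix (Fin (d + 1)) (Fin (d + 1)) ℝ) k G j 0 = 0)
    (hunit : IsUnit (constantCoeff (R := Matrix (Fin (d + 1)) (Fin (d + 1)) ℝ) G))
    (hGH : G * H = 1) (hHG : H * G = 1) :
    (∀ k, Odd k → k ≤ 2 * ℓ →
      coeff (R := Matrix (Fin (d + 1)) (Fin (d + 1)) ℝ) k H 0 0 = 0) ∧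
    (∀ k, Odd k → k ≤ 2 * ℓ → ∀ i j : Fin (d + 1), i ≠ 0 → j ≠ 0 →
      coeff (R := Matrix (Fin (d + 1)) (Fin (d + 1)) ℝ) k H i j = 0) ∧
    (∀ k, Even k → k ≤ 2 * ℓ → ∀ j : Fin (d + 1), j ≠ 0 →
      coeff (R := Matrix (Fin (d + 1)) (Fin (d + 1)) ℝ) k H 0 j = 0 ∧
      coeff (R := Matrix (Fin (d + 1)) (Fin (d + 1)) ℝ) k H j 0 = 0) := by
  set s : Fin (d + 1) → ℝ := fun i => if i = 0 then -1 else 1 with hsdef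
  have hs : ∀ i, s i * s i = 1 := by
    intro i; simp only [hsdef]; split <;> norm_num
  have hG : ∀ a, a ≤ 2 * ℓ → Matrix.diagonal s * coeff a G * Matrix.diagonal s
      = (-1 : ℝ) ^ a • coeff a G := by
    intro a ha
    ext i j
    rw [Matrix.mul_diagonal, Matrix.diagonal_mul, Matrix.smul_apply, smul_eq_mul]
    rcases Nat.even_or_odd a with hev | hod
    · rw [hev.neg_one_pow]
      by_cases hi : i = 0 <;> by_cases hj : j = 0
      · subst hi; subst hj; simp [hsdef]
      · subst hi; rw [(hxa a hev ha j hj).1]; simp [hsdef, hj]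
      · subst hj; rw [(hxa a hev ha i hi).2]; simp [hsdef, hi]
      · simp [hsdef, hi, hj]
    · rw [hod.neg_one_pow]
      by_cases hi : i = 0 <;> by_cases hj : j = 0
      · subst hi; subst hj; rw [hxx a hod ha]; simp [hsdef]
      · subst hi; simp [hsdef, hj]
      · subst hj; simp [hsdef, hi]
      · rw [hab a hod ha i j hi hj]; simp [hsdef, hi, hj]
  have key := aux13 s hs G H hG hGH hHG
  have entry : ∀ k, k ≤ 2 * ℓ → ∀ i j,
      s i * coeff (R := Matrix (Fin (d + 1)) (Fin (d + 1)) ℝ) k H i j * s j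
        = (-1 : ℝ) ^ k * coeff (R := Matrix (Fin (d + 1)) (Fin (d + 1)) ℝ) k H i j := by
    intro k hk i j
    have := congrArg (fun M : Matrix (Fin (d + 1)) (Fin (d + 1)) ℝ => M i j) (key k hk)
    simpa [Matrix.mul_diagonal, Matrix.diagonal_mul, Matrix.smul_apply, smul_eq_mul]
      using this
  refine ⟨?_, ?_, ?_⟩
  · intro k hod hk
    have h := entry k hk 0 0
    rw [hod.neg_one_pow] at h
    simp only [hsdef, if_pos rfl] at h
    nlinarith [h]
  · intro k hod hk i j hi hj
    have h := entry k hk i j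
    rw [hod.neg_one_pow] at h
    simp only [hsdef, if_neg hi, if_neg hj] at h
    nlinarith [h]
  · intro k hev hk j hj
    constructor
    · have h := entry k hk 0 j
      rw [hev.neg_one_pow] at h
      simp only [hsdef, if_pos rfl, if_neg hj] at h
      nlinarith [h]
    · have h := entry k hk j 0
      rw [hev.neg_one_pow] at h
      simp only [hsdef, if_pos rfl, if_neg hj] at h
      nlinarith [h]
end

section
/- Let f(x) satisfy the scalar Riccati-type ODE f'(x) + (x/2)(f'(x)² + c(x)) = 0 with f(0) = 0, where c(x) is a smooth (or formal power series) coefficient that is even to order 2ℓ. Then the formal power series solution f is even to order 2ℓ+2: all coefficients of odd powers x^{2j+1} with j ≤ ℓ vanish. -/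
open PowerSeries

/-- a formal power series solution f, with f(0) = 0, of the Riccati-type
ODE f' + (x/2)(f'² + c) = 0, where c is even to order 2ℓ, is even to order 2ℓ+2:
all coefficients of x^{2j+1} with j ≤ ℓ vanish. -/
theorem stmt14 (ℓ : ℕ) (c f : PowerSeries ℝ)
    (hc : ∀ j, Odd j → j < 2 * ℓ → coeff j c = 0)
    (hf0 : constantCoeff f = 0)
    (hode : derivativeFun f + (1 / 2 : ℝ) • (X * ((derivativeFun f) ^ 2 + c)) = 0) :
    ∀ j, j ≤ ℓ → coeff (2 * j + 1) f = 0 := by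
  set g := derivativeFun f with hg
  have hkey : ∀ j, j ≤ ℓ → coeff (2 * j) g = 0 := by
    intro j
    induction j using Nat.strong_induction_on with
    | _ j ih =>
      intro hj
      have h := congrArg (coeff (2 * j)) hode
      simp only [map_add, map_smul, map_zero] at h
      match j, hj, ih with
      | 0, hj, ih =>
        simpa using h
      | Nat.succ i, hj, ih =>
        have hx : (2 * (i+1)) = (2*i+1) + 1 := by ring
        rw [hx, coeff_succ_X_mul] at h
        have hcz : coeff (2*i+1) c = 0 := by
          apply hc _ ⟨i, by ring⟩
          omega
        have hg2 : coeff (2*i+1) (g ^ 2) = 0 := by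
          rw [sq, coeff_mul]
          apply Finset.sum_eq_zero
          intro p hp
          rw [Finset.HasAntidiagonal.mem_antidiagonal] at hp
          rcases Nat.even_or_odd p.1 with he | ho
          · obtain ⟨k, hk⟩ := he
            have hz : coeff p.1 g = 0 := by
              have hk2 : p.1 = 2 * k := by omega
              rw [hk2]; exact ih k (by omega) (by omega)
            rw [hz, zero_mul]
          · have he2 : Even p.2 := by
              rcases Nat.even_or_odd p.2 with h2 | h2
              · exact h2
              · exfalso; obtain ⟨a, ha⟩ := ho; obtain ⟨b, hb⟩ := h2; omega
            obtain ⟨k, hk⟩ := he2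
            have hz : coeff p.2 g = 0 := by
              have hk2 : p.2 = 2 * k := by omega
              rw [hk2]; exact ih k (by omega) (by omega)
            rw [hz, mul_zero]
        rw [map_add, hcz, hg2] at h
        rw [hx]; simpa using h
  intro j hj
  have hz := hkey j hj
  rw [hg] at hz; change coeff (2 * j) (derivative ℝ f) = 0 at hz; rw [coeff_derivative] at hz
  have h2 : ((2*j+1 : ℕ) : ℝ) ≠ 0 := by positivity
  rcases mul_eq_zero.mp hz with h | h
  · exact h
  · exact absurd h (by push_cast; positivity)
end
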